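/- arXiv:2209.08395 — 5 statements merged into one kernel-verified Lean document; each statement's English description precedes it below -/
import Mathlib

section
/- Let h : (0,∞) → (0,∞) be a strictly positive non-decreasing function such that s·h(r) ≤ r·h(s) for all 0 < r ≤ s. Let φ : (0,∞) → [0,∞) be a nonnegative non-increasing function that is integrable on (0,s) for every s > 0. Then for all r, s ∈ (0,∞), min{1/h(r), 1/h(s)} · ∫_0^s φ(t) dt ≤ (1/h(r)) · ∫_0^r φ(t) dt. -/
open MeasureTheory Set

/-!
For `r ≤ s` the average `(1/s) ∫₀ˢ φ` of the non-increasing `φ` is at most `(1/r) ∫₀ʳ φ`, and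
`s·h(r) ≤ r·h(s)` converts the factor `s/r` into `h(s)/h(r)`; this bounds the minimum by its
second entry. For `s ≤ r` it suffices to bound the minimum by its first entry and use `φ ≥ 0`.
-/

theorem mul_le_setIntegral_Ioc {f : ℝ → ℝ} {a b c : ℝ} (hab : a ≤ b)
    (hf : ∀ x ∈ Ioc a b, c ≤ f x) (hint : IntegrableOn f (Ioc a b)) :
    (b - a) * c ≤ ∫ x in Ioc a b, f x := by
  simpa [Real.volume_real_Ioc_of_le hab, mul_comm] using
    setIntegral_ge_of_const_le_real measurableSet_Ioc measure_Ioc_lt_top.ne hf hint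

theorem setIntegral_Ioc_le_mul {f : ℝ → ℝ} {a b c : ℝ} (hab : a ≤ b)
    (hf : ∀ x ∈ Ioc a b, f x ≤ c) (hint : IntegrableOn f (Ioc a b)) :
    ∫ x in Ioc a b, f x ≤ (b - a) * c := by
  have := mul_le_setIntegral_Ioc hab (c := -c) (fun x hx => neg_le_neg (hf x hx)) hint.neg
  rw [integral_neg] at this
  linarith

theorem mul_setIntegral_Ioc_zero_le_of_antitoneOn {φ : ℝ → ℝ} {r s : ℝ}
    (hφ : AntitoneOn φ (Ioi 0)) (hint : IntegrableOn φ (Ioc 0 s)) (hr : 0 < r) (hrs : r ≤ s) :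
    r * ∫ t in Ioc 0 s, φ t ≤ s * ∫ t in Ioc 0 r, φ t := by
  have hint_r : IntegrableOn φ (Ioc 0 r) := hint.mono_set (Ioc_subset_Ioc_right hrs)
  have hint_rs : IntegrableOn φ (Ioc r s) := hint.mono_set (Ioc_subset_Ioc_left hr.le)
  have hsplit : ∫ t in Ioc 0 s, φ t = (∫ t in Ioc 0 r, φ t) + ∫ t in Ioc r s, φ t := by
    rw [← setIntegral_union (Ioc_disjoint_Ioc_of_le le_rfl) measurableSet_Ioc hint_r hint_rs,
      Ioc_union_Ioc_eq_Ioc hr.le hrs]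
  have hlow : r * φ r ≤ ∫ t in Ioc 0 r, φ t := by
    simpa using mul_le_setIntegral_Ioc hr.le (fun t ht => hφ ht.1 hr ht.2) hint_r
  have hup : ∫ t in Ioc r s, φ t ≤ (s - r) * φ r :=
    setIntegral_Ioc_le_mul hrs (fun t ht => hφ hr (hr.trans ht.1) ht.1.le) hint_rs
  rw [hsplit]
  nlinarith [mul_le_mul_of_nonneg_left hlow (sub_nonneg.2 hrs), mul_le_mul_of_nonneg_left hup hr.le]

theorem min_mul_integral_le_general (h : ℝ → ℝ)
    (hpos : ∀ r, 0 < r → 0 < h r)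
    (hhom : ∀ r s, 0 < r → r ≤ s → s * h r ≤ r * h s)
    (φ : ℝ → ℝ)
    (hφ0 : ∀ t, 0 < t → 0 ≤ φ t)
    (hφmono : ∀ t₁ t₂, 0 < t₁ → t₁ ≤ t₂ → φ t₂ ≤ φ t₁)
    (hφint : ∀ s, 0 < s → IntegrableOn φ (Ioc 0 s))
    (r s : ℝ) (hr : 0 < r) (hs : 0 < s) :
    min (1 / h r) (1 / h s) * ∫ t in Ioc 0 s, φ t
      ≤ (1 / h r) * ∫ t in Ioc 0 r, φ t := by
  have hφ0_ae : ∀ a, 0 ≤ᵐ[volume.restrict (Ioc 0 a)] φ := fun a =>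
    (ae_restrict_mem measurableSet_Ioc).mono fun t ht => hφ0 t ht.1
  have hIs : 0 ≤ ∫ t in Ioc 0 s, φ t := integral_nonneg_of_ae (hφ0_ae s)
  have hIr : 0 ≤ ∫ t in Ioc 0 r, φ t := integral_nonneg_of_ae (hφ0_ae r)
  rcases le_total s r with hsr | hrs
  · calc min (1 / h r) (1 / h s) * ∫ t in Ioc 0 s, φ t
        ≤ (1 / h r) * ∫ t in Ioc 0 s, φ t := mul_le_mul_of_nonneg_right (min_le_left _ _) hIs
      _ ≤ (1 / h r) * ∫ t in Ioc 0 r, φ t :=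
        mul_le_mul_of_nonneg_left (setIntegral_mono_set (hφint r hr) (hφ0_ae r)
          (Ioc_subset_Ioc_right hsr).eventuallyLE) (one_div_pos.2 (hpos r hr)).le
  · have havg := mul_setIntegral_Ioc_zero_le_of_antitoneOn
      (fun a ha b _ hab => hφmono a b ha hab) (hφint s hs) hr hrs
    have hmul : r * ((∫ t in Ioc 0 s, φ t) * h r) ≤ r * ((∫ t in Ioc 0 r, φ t) * h s) := by
      nlinarith [mul_le_mul_of_nonneg_right havg (hpos r hr).le,
        mul_le_mul_of_nonneg_left (hhom r s hr hrs) hIr]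
    calc min (1 / h r) (1 / h s) * ∫ t in Ioc 0 s, φ t
        ≤ (1 / h s) * ∫ t in Ioc 0 s, φ t := mul_le_mul_of_nonneg_right (min_le_right _ _) hIs
      _ ≤ (1 / h r) * ∫ t in Ioc 0 r, φ t := by
        rw [one_div_mul_eq_div, one_div_mul_eq_div, div_le_div_iff₀ (hpos s hs) (hpos r hr)]
        exact le_of_mul_le_mul_left hmul hr

/-- The core pointwise estimate behind the Frank–Laptev–Weidl type lemma:
if `h` is positive, non-decreasing on `(0,∞)` and satisfies `s·h(r) ≤ r·h(s)` for
`0 < r ≤ s`, and `φ` is nonnegative, non-increasing and locally integrable on `(0,∞)`,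
then `min{1/h(r), 1/h(s)} · ∫_0^s φ ≤ (1/h(r)) · ∫_0^r φ` for all `r, s > 0`. -/
theorem min_mul_integral_le (h : ℝ → ℝ)
    (hpos : ∀ r, 0 < r → 0 < h r)
    (hmono : ∀ r s, 0 < r → r ≤ s → h r ≤ h s)
    (hhom : ∀ r s, 0 < r → r ≤ s → s * h r ≤ r * h s)
    (φ : ℝ → ℝ)
    (hφ0 : ∀ t, 0 < t → 0 ≤ φ t)
    (hφmono : ∀ t₁ t₂, 0 < t₁ → t₁ ≤ t₂ → φ t₂ ≤ φ t₁)
    (hφint : ∀ s, 0 < s → IntegrableOn φ (Ioc 0 s))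
    (r s : ℝ) (hr : 0 < r) (hs : 0 < s) :
    min (1 / h r) (1 / h s) * ∫ t in Ioc 0 s, φ t
      ≤ (1 / h r) * ∫ t in Ioc 0 r, φ t :=
  min_mul_integral_le_general h hpos hhom φ hφ0 hφmono hφint r s hr hs
end

section
/- Let 1 < p < ∞. Let g : (0,∞) → [0,∞) be a nonnegative measurable function, and let h : (0,∞) → (0,∞) be a strictly positive non-decreasing function such that s·h(r) ≤ r·h(s) for all 0 < r ≤ s. Let f : (0,∞) → ℝ be measurable and let φ : (0,∞) → [0,∞) be a nonnegative non-increasing function such that ∫_0^s |f(t)| dt ≤ ∫_0^s φ(t) dt for all s > 0 (in particular this holds when φ is the symmetric decreasing rearrangement of f). Then ∫_0^∞ g(r) · ( sup_{0<s<∞} | min{1/h(r), 1/h(s)} · ∫_0^s f(t) dt | )^p dr ≤ ∫_0^∞ g(r) · ( (1/h(r)) · ∫_0^r φ(t) dt )^p dr. -/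
open MeasureTheory Set
open scoped ENNReal

/-!
Fix `r > 0` and write `Φ(s) = ∫_0^s φ`. Since `φ` is non-increasing, `Φ` is non-decreasing and
`Φ(s)/s` is non-increasing, and `h` has the same two properties by hypothesis. For such a pair,
`min(1/h(r), 1/h(s)) Φ(s) ≤ Φ(r)/h(r)` for every `s > 0`: for `s ≤ r` use the monotonicity of `Φ`,
for `s ≥ r` use `Φ(s) ≤ (s/r) Φ(r)` and `s/h(s) ≤ r/h(r)`. Combined with the Hardy–Littlewood bound
`|∫_0^s f| ≤ Φ(s)` this bounds the supremum pointwise in `r`, and the inequality follows by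
monotonicity of the integral.
-/

theorem ofReal_abs_setIntegral_le_setLIntegral {α : Type*} [MeasurableSpace α] {μ : Measure α}
    (s : Set α) (f : α → ℝ) :
    ENNReal.ofReal |∫ t in s, f t ∂μ| ≤ ∫⁻ t in s, ENNReal.ofReal |f t| ∂μ := by
  simpa only [Real.enorm_eq_ofReal_abs] using enorm_integral_le_lintegral_enorm (μ := μ.restrict s) f

theorem setLIntegral_Ioc_zero_le_ofReal_div_mul {φ : ℝ → ℝ≥0∞} (hφ : AntitoneOn φ (Ioi 0))
    {r s : ℝ} (hr : 0 < r) (hrs : r ≤ s) :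
    ∫⁻ t in Ioc 0 s, φ t ≤ ENNReal.ofReal (s / r) * ∫⁻ t in Ioc 0 r, φ t := by
  set Φ := ∫⁻ t in Ioc 0 r, φ t
  have hhead : φ r * ENNReal.ofReal r ≤ Φ := by
    calc φ r * ENNReal.ofReal r = ∫⁻ _ in Ioc 0 r, φ r := by
          rw [setLIntegral_const, Real.volume_Ioc, sub_zero]
      _ ≤ Φ := setLIntegral_mono' measurableSet_Ioc fun t ht =>
          hφ ht.1 (mem_Ioi.2 hr) ht.2
  have htail : ∫⁻ t in Ioc r s, φ t ≤ φ r * ENNReal.ofReal (s - r) := by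
    calc ∫⁻ t in Ioc r s, φ t ≤ ∫⁻ _ in Ioc r s, φ r :=
          setLIntegral_mono' measurableSet_Ioc fun t ht =>
            hφ (mem_Ioi.2 hr) (mem_Ioi.2 (hr.trans ht.1)) ht.1.le
      _ = φ r * ENNReal.ofReal (s - r) := by rw [setLIntegral_const, Real.volume_Ioc]
  have hratio : ENNReal.ofReal (s / r) = 1 + ENNReal.ofReal ((s - r) / r) := by
    rw [← ENNReal.ofReal_one, ← ENNReal.ofReal_add zero_le_one (div_nonneg (by linarith) hr.le)]
    congr 1
    field_simp
    ring
  calc ∫⁻ t in Ioc 0 s, φ t = Φ + ∫⁻ t in Ioc r s, φ t := by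
        rw [← lintegral_union measurableSet_Ioc (Ioc_disjoint_Ioc_of_le le_rfl),
          Ioc_union_Ioc_eq_Ioc hr.le hrs]
    _ ≤ Φ + φ r * ENNReal.ofReal r * ENNReal.ofReal ((s - r) / r) := by
        rw [mul_assoc, ← ENNReal.ofReal_mul hr.le, mul_div_cancel₀ _ hr.ne']
        exact add_le_add_right htail _
    _ ≤ Φ + Φ * ENNReal.ofReal ((s - r) / r) := by gcongr
    _ = ENNReal.ofReal (s / r) * Φ := by rw [hratio]; ring

theorem ofReal_min_one_div_mul_le {h : ℝ → ℝ} {F : ℝ → ℝ≥0∞}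
    (hpos : ∀ r, 0 < r → 0 < h r)
    (hmono : ∀ r s, 0 < r → r ≤ s → h r ≤ h s)
    (hhom : ∀ r s, 0 < r → r ≤ s → s * h r ≤ r * h s)
    (hFmono : ∀ r s, 0 < r → r ≤ s → F r ≤ F s)
    (hFhom : ∀ r s, 0 < r → r ≤ s → F s ≤ ENNReal.ofReal (s / r) * F r)
    {r s : ℝ} (hr : 0 < r) (hs : 0 < s) :
    ENNReal.ofReal (min (1 / h r) (1 / h s)) * F s ≤ ENNReal.ofReal (1 / h r) * F r := by
  have hhr := hpos r hr
  have hhs := hpos s hs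
  rcases le_total s r with hsr | hrs
  · rw [min_eq_left (one_div_le_one_div_of_le hhs (hmono s r hs hsr))]
    gcongr
    exact hFmono s r hs hsr
  · rw [min_eq_right (one_div_le_one_div_of_le hhr (hmono r s hr hrs))]
    have hweight : 1 / h s * (s / r) ≤ 1 / h r := by
      rw [div_mul_div_comm, one_mul, div_le_div_iff₀ (by positivity) hhr]
      nlinarith [hhom r s hr hrs]
    calc ENNReal.ofReal (1 / h s) * F s
        ≤ ENNReal.ofReal (1 / h s) * (ENNReal.ofReal (s / r) * F r) := by
          gcongr
          exact hFhom r s hr hrs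
      _ = ENNReal.ofReal (1 / h s * (s / r)) * F r := by
          rw [ENNReal.ofReal_mul (by positivity), mul_assoc]
      _ ≤ ENNReal.ofReal (1 / h r) * F r := by gcongr

theorem key_lemma_general (p : ℝ) (hp : 1 < p)
    (g : ℝ → ℝ)
    (h : ℝ → ℝ)
    (hpos : ∀ r, 0 < r → 0 < h r)
    (hmono : ∀ r s, 0 < r → r ≤ s → h r ≤ h s)
    (hhom : ∀ r s, 0 < r → r ≤ s → s * h r ≤ r * h s)
    (f : ℝ → ℝ)
    (φ : ℝ → ℝ)
    (hφmono : ∀ t₁ t₂, 0 < t₁ → t₁ ≤ t₂ → φ t₂ ≤ φ t₁)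
    (hHL : ∀ s, 0 < s →
      ∫⁻ t in Ioc 0 s, ENNReal.ofReal |f t| ≤ ∫⁻ t in Ioc 0 s, ENNReal.ofReal (φ t)) :
    ∫⁻ r in Ioi (0 : ℝ), ENNReal.ofReal (g r) *
        (⨆ s ∈ Ioi (0 : ℝ),
          ENNReal.ofReal |min (1 / h r) (1 / h s) * ∫ t in Ioc 0 s, f t|) ^ p
      ≤ ∫⁻ r in Ioi (0 : ℝ), ENNReal.ofReal (g r) *
          (ENNReal.ofReal (1 / h r) * ∫⁻ t in Ioc 0 r, ENNReal.ofReal (φ t)) ^ p := by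
  set Φ : ℝ → ℝ≥0∞ := fun s => ∫⁻ t in Ioc 0 s, ENNReal.ofReal (φ t)
  have hΦhom : ∀ r s, 0 < r → r ≤ s → Φ s ≤ ENNReal.ofReal (s / r) * Φ r :=
    fun r s hr hrs => setLIntegral_Ioc_zero_le_ofReal_div_mul
      (fun t₁ ht₁ _ _ ht => ENNReal.ofReal_le_ofReal (hφmono t₁ _ ht₁ ht)) hr hrs
  have hΦmono : ∀ r s, 0 < r → r ≤ s → Φ r ≤ Φ s :=
    fun r s _ hrs => lintegral_mono_set (Ioc_subset_Ioc_right hrs)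
  have hpointwise : ∀ r > 0, ∀ s > 0,
      ENNReal.ofReal |min (1 / h r) (1 / h s) * ∫ t in Ioc 0 s, f t|
        ≤ ENNReal.ofReal (1 / h r) * Φ r := by
    intro r hr s hs
    have hmin : 0 ≤ min (1 / h r) (1 / h s) :=
      le_min (one_div_nonneg.2 (hpos r hr).le) (one_div_nonneg.2 (hpos s hs).le)
    rw [abs_mul, abs_of_nonneg hmin, ENNReal.ofReal_mul hmin]
    calc _ ≤ ENNReal.ofReal (min (1 / h r) (1 / h s)) * Φ s :=
          mul_le_mul_right ((ofReal_abs_setIntegral_le_setLIntegral _ f).trans (hHL s hs)) _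
      _ ≤ _ := ofReal_min_one_div_mul_le hpos hmono hhom hΦmono hΦhom hr hs
  refine setLIntegral_mono' measurableSet_Ioi fun r hr => ?_
  gcongr
  exact iSup₂_le fun s hs => hpointwise r hr s hs

/-- Key lemma (weighted Hardy-type inequality with rearrangement on the half-line):
for `1 < p < ∞`, nonnegative measurable `g`, positive non-decreasing `h` with
`s·h(r) ≤ r·h(s)` for `0 < r ≤ s`, measurable `f` locally integrable near `0`, and
nonnegative non-increasing `φ` with `∫_0^s |f| ≤ ∫_0^s φ` for all `s > 0`, one has
`∫_0^∞ g(r) (sup_{s>0} |min{1/h(r),1/h(s)} ∫_0^s f|)^p dr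
  ≤ ∫_0^∞ g(r) ((1/h(r)) ∫_0^r φ)^p dr`. -/
theorem key_lemma (p : ℝ) (hp : 1 < p)
    (g : ℝ → ℝ) (hg : Measurable g) (hg0 : ∀ r, 0 < r → 0 ≤ g r)
    (h : ℝ → ℝ)
    (hpos : ∀ r, 0 < r → 0 < h r)
    (hmono : ∀ r s, 0 < r → r ≤ s → h r ≤ h s)
    (hhom : ∀ r s, 0 < r → r ≤ s → s * h r ≤ r * h s)
    (f : ℝ → ℝ) (hf : Measurable f)
    (hfint : ∀ s, 0 < s → IntegrableOn f (Ioc 0 s))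
    (φ : ℝ → ℝ) (hφmeas : Measurable φ)
    (hφ0 : ∀ t, 0 < t → 0 ≤ φ t)
    (hφmono : ∀ t₁ t₂, 0 < t₁ → t₁ ≤ t₂ → φ t₂ ≤ φ t₁)
    (hHL : ∀ s, 0 < s →
      ∫⁻ t in Ioc 0 s, ENNReal.ofReal |f t| ≤ ∫⁻ t in Ioc 0 s, ENNReal.ofReal (φ t)) :
    ∫⁻ r in Ioi (0 : ℝ), ENNReal.ofReal (g r) *
        (⨆ s ∈ Ioi (0 : ℝ),
          ENNReal.ofReal |min (1 / h r) (1 / h s) * ∫ t in Ioc 0 s, f t|) ^ p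
      ≤ ∫⁻ r in Ioi (0 : ℝ), ENNReal.ofReal (g r) *
          (ENNReal.ofReal (1 / h r) * ∫⁻ t in Ioc 0 r, ENNReal.ofReal (φ t)) ^ p :=
  key_lemma_general p hp g h hpos hmono hhom f φ hφmono hHL
end

section
/- Let 1 ≤ N < p < ∞. Let f : (0,∞) → ℝ be measurable and let φ : (0,∞) → [0,∞) be a nonnegative non-increasing function such that ∫_0^s |f(t)| dt ≤ ∫_0^s φ(t) dt for all s > 0 (in particular this holds when φ is the symmetric decreasing rearrangement of f). Then ∫_0^∞ r^{N−1} · ( sup_{0<s<∞} | min{1/r, 1/s} · ∫_0^s f(t) dt | )^p dr ≤ (p/(p−N))^p · ∫_0^∞ r^{N−1} φ(r)^p dr. -/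
/-!
Write `Φ r = ∫₀ʳ φ`. As `φ` is non-increasing, the averages `Φ r / r` are non-increasing in `r`;
together with `|∫₀ˢ f| ≤ Φ s` this bounds the supremum at `r` by `Φ r / r`. What remains is
Hardy's inequality `∫₀^∞ r^(N-1) (Φ r / r)^p ≤ (p/(p-N))^p ∫₀^∞ r^(N-1) φ^p`, which follows from
Hölder's inequality on `(0, r]` with the power weight `t^((N/p)(p-1))`, and Tonelli.
-/

open MeasureTheory Set
open scoped ENNReal

theorem setLIntegral_Ioc_rpow {s r : ℝ} (hs : -1 < s) (hr : 0 ≤ r) :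
    ∫⁻ t in Ioc 0 r, ENNReal.ofReal (t ^ s) = ENNReal.ofReal (r ^ (s + 1) / (s + 1)) := by
  have hint : IntegrableOn (fun t : ℝ => t ^ s) (Ioc 0 r) := by
    rw [← intervalIntegrable_iff_integrableOn_Ioc_of_le hr]
    exact intervalIntegral.intervalIntegrable_rpow' hs
  rw [← ofReal_integral_eq_lintegral_ofReal hint
      (ae_restrict_of_forall_mem measurableSet_Ioc fun t ht => Real.rpow_nonneg ht.1.le s),
    ← intervalIntegral.integral_of_le hr, integral_rpow (Or.inl hs),
    Real.zero_rpow (by linarith), sub_zero]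

theorem setLIntegral_Ici_rpow {s t : ℝ} (hs : s < -1) (ht : 0 < t) :
    ∫⁻ r in Ici t, ENNReal.ofReal (r ^ s) = ENNReal.ofReal (-t ^ (s + 1) / (s + 1)) := by
  rw [← setLIntegral_congr Ioi_ae_eq_Ici,
    ← ofReal_integral_eq_lintegral_ofReal (integrableOn_Ioi_rpow_of_lt hs ht)
      (ae_restrict_of_forall_mem measurableSet_Ioi fun r hr =>
        Real.rpow_nonneg (ht.trans hr).le s),
    integral_Ioi_rpow_of_lt hs ht]

theorem lintegral_Ioi_mul_setLIntegral_Ioc {w ψ : ℝ → ℝ≥0∞} (hw : Measurable w)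
    (hψ : Measurable ψ) :
    ∫⁻ r in Ioi 0, w r * ∫⁻ t in Ioc 0 r, ψ t = ∫⁻ t in Ioi 0, ψ t * ∫⁻ r in Ici t, w r := by
  set F : ℝ × ℝ → ℝ≥0∞ := {x | x.2 ≤ x.1}.indicator fun x => w x.1 * ψ x.2
  have hF : Measurable F :=
    ((hw.comp measurable_fst).mul (hψ.comp measurable_snd)).indicator
      (measurableSet_le measurable_snd measurable_fst)
  calc ∫⁻ r in Ioi 0, w r * ∫⁻ t in Ioc 0 r, ψ t
      = ∫⁻ r in Ioi 0, ∫⁻ t in Ioi 0, F (r, t) := by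
        refine lintegral_congr fun r => ?_
        have hFr : (fun t => F (r, t)) = (Iic r).indicator fun t => w r * ψ t := rfl
        rw [hFr, lintegral_indicator measurableSet_Iic, Measure.restrict_restrict measurableSet_Iic,
          Iic_inter_Ioi, lintegral_const_mul _ hψ]
    _ = ∫⁻ t in Ioi 0, ∫⁻ r in Ioi 0, F (r, t) := lintegral_lintegral_swap hF.aemeasurable
    _ = ∫⁻ t in Ioi 0, ψ t * ∫⁻ r in Ici t, w r := by
        refine setLIntegral_congr_fun measurableSet_Ioi fun t (ht : 0 < t) => ?_
        have hFt : (fun r => F (r, t)) = (Ici t).indicator fun r => w r * ψ t := rfl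
        rw [hFt, lintegral_indicator measurableSet_Ici, Measure.restrict_restrict measurableSet_Ici,
          inter_eq_left.2 (Ici_subset_Ioi.2 ht), lintegral_mul_const _ hw, mul_comm]

-- Hölder for `φ = (φ t ^ β) t ^ (-β)`; `a < 1` makes `t ^ (-β q) = t ^ (-a)` integrable at `0`.
theorem setLIntegral_Ioc_rpow_le {a p r : ℝ} (ha : a < 1) (hp : 1 < p) (hr : 0 ≤ r)
    {φ : ℝ → ℝ≥0∞} (hφ : Measurable φ) :
    (∫⁻ t in Ioc 0 r, φ t) ^ p
      ≤ ENNReal.ofReal (r ^ (1 - a) / (1 - a)) ^ (p - 1)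
        * ∫⁻ t in Ioc 0 r, ENNReal.ofReal (t ^ (a * (p - 1))) * φ t ^ p := by
  set q := p / (p - 1)
  have hpq : p.HolderConjugate q := (Real.holderConjugate_iff_eq_conjExponent hp).2 rfl
  set β := a * (p - 1) / p
  have hFG : ∫⁻ t in Ioc 0 r, φ t
      = ∫⁻ t in Ioc 0 r, (φ t * ENNReal.ofReal (t ^ β)) * ENNReal.ofReal (t ^ (-β)) := by
    refine setLIntegral_congr_fun measurableSet_Ioc fun t ht => ?_
    rw [mul_assoc, ← ENNReal.ofReal_mul (Real.rpow_nonneg ht.1.le _), ← Real.rpow_add ht.1,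
      add_neg_cancel, Real.rpow_zero, ENNReal.ofReal_one, mul_one]
  have hFp : ∫⁻ t in Ioc 0 r, (φ t * ENNReal.ofReal (t ^ β)) ^ p
      = ∫⁻ t in Ioc 0 r, ENNReal.ofReal (t ^ (a * (p - 1))) * φ t ^ p := by
    refine setLIntegral_congr_fun measurableSet_Ioc fun t ht => ?_
    rw [ENNReal.mul_rpow_of_nonneg _ _ (by linarith), mul_comm,
      ENNReal.ofReal_rpow_of_nonneg (Real.rpow_nonneg ht.1.le _) (by linarith),
      ← Real.rpow_mul ht.1.le, div_mul_cancel₀ _ (by linarith)]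
  have hGq : ∫⁻ t in Ioc 0 r, ENNReal.ofReal (t ^ (-β)) ^ q
      = ENNReal.ofReal (r ^ (1 - a) / (1 - a)) := by
    have hβq : -β * q = -a := by
      simp only [β, q]
      field_simp [(by linarith : p - 1 ≠ 0)]
    rw [← neg_add_eq_sub, ← setLIntegral_Ioc_rpow (by linarith) hr]
    refine setLIntegral_congr_fun measurableSet_Ioc fun t ht => ?_
    rw [ENNReal.ofReal_rpow_of_nonneg (Real.rpow_nonneg ht.1.le _) hpq.symm.nonneg,
      ← Real.rpow_mul ht.1.le, hβq]
  calc (∫⁻ t in Ioc 0 r, φ t) ^ p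
      ≤ ((∫⁻ t in Ioc 0 r, (φ t * ENNReal.ofReal (t ^ β)) ^ p) ^ (1 / p)
          * (∫⁻ t in Ioc 0 r, ENNReal.ofReal (t ^ (-β)) ^ q) ^ (1 / q)) ^ p := by
        rw [hFG]
        gcongr
        exact ENNReal.lintegral_mul_le_Lp_mul_Lq _ hpq
          ((hφ.mul (by fun_prop)).aemeasurable) (by fun_prop)
    _ = _ := by
        rw [hFp, hGq, ENNReal.mul_rpow_of_nonneg _ _ hpq.nonneg, ← ENNReal.rpow_mul,
          ← ENNReal.rpow_mul, one_div_mul_cancel hpq.ne_zero, ENNReal.rpow_one, mul_comm,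
          one_div_mul_eq_div, hpq.div_conj_eq_sub_one]

theorem ofReal_rpow_mul_average_rpow_le {a p r : ℝ} (ha : a < 1) (hp : 1 < p) (hr : 0 < r)
    {φ : ℝ → ℝ≥0∞} (hφ : Measurable φ) :
    ENNReal.ofReal (r ^ (a * p - 1)) * (ENNReal.ofReal (1 / r) * ∫⁻ t in Ioc 0 r, φ t) ^ p
      ≤ ENNReal.ofReal ((1 / (1 - a)) ^ (p - 1)) * (ENNReal.ofReal (r ^ (a - 2))
        * ∫⁻ t in Ioc 0 r, ENNReal.ofReal (t ^ (a * (p - 1))) * φ t ^ p) := by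
  have hreal : r ^ (a * p - 1) * ((1 / r) ^ p * (r ^ (1 - a) / (1 - a)) ^ (p - 1))
      = (1 / (1 - a)) ^ (p - 1) * r ^ (a - 2) := by
    rw [div_eq_mul_one_div (r ^ (1 - a)), Real.mul_rpow (by positivity) (by positivity),
      ← Real.rpow_mul hr.le, one_div r, Real.inv_rpow hr.le, ← Real.rpow_neg hr.le,
      show a - 2 = a * p - 1 + (-p + (1 - a) * (p - 1)) by ring, Real.rpow_add hr,
      Real.rpow_add hr]
    ring
  calc ENNReal.ofReal (r ^ (a * p - 1)) * (ENNReal.ofReal (1 / r) * ∫⁻ t in Ioc 0 r, φ t) ^ p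
      ≤ ENNReal.ofReal (r ^ (a * p - 1)) * (ENNReal.ofReal (1 / r) ^ p
        * (ENNReal.ofReal (r ^ (1 - a) / (1 - a)) ^ (p - 1)
          * ∫⁻ t in Ioc 0 r, ENNReal.ofReal (t ^ (a * (p - 1))) * φ t ^ p)) := by
        rw [ENNReal.mul_rpow_of_nonneg _ _ (by linarith)]
        gcongr
        exact setLIntegral_Ioc_rpow_le ha hp hr.le hφ
    _ = _ := by
        rw [ENNReal.ofReal_rpow_of_nonneg (by positivity) (by linarith),
          ENNReal.ofReal_rpow_of_nonneg (by positivity) (by linarith), ← mul_assoc, ← mul_assoc,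
          ← ENNReal.ofReal_mul (by positivity), ← ENNReal.ofReal_mul (by positivity),
          mul_assoc (r ^ (a * p - 1)), hreal, ENNReal.ofReal_mul (by positivity), mul_assoc]

theorem lintegral_rpow_mul_average_rpow_le {c p : ℝ} (hp : 1 < p) (hcp : c < p)
    {φ : ℝ → ℝ≥0∞} (hφ : Measurable φ) :
    ∫⁻ r in Ioi 0, ENNReal.ofReal (r ^ (c - 1))
        * (ENNReal.ofReal (1 / r) * ∫⁻ t in Ioc 0 r, φ t) ^ p
      ≤ ENNReal.ofReal ((p / (p - c)) ^ p)
        * ∫⁻ r in Ioi 0, ENNReal.ofReal (r ^ (c - 1)) * φ r ^ p := by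
  have hp0 : 0 < p := by linarith
  obtain ⟨a, rfl⟩ : ∃ a, c = a * p := ⟨c / p, (div_mul_cancel₀ c hp0.ne').symm⟩
  have ha : a < 1 := (mul_lt_iff_lt_one_left hp0).1 (by simpa using hcp)
  rw [show p / (p - a * p) = 1 / (1 - a) by field_simp [(by linarith : 1 - a ≠ 0)]]
  set ψ : ℝ → ℝ≥0∞ := fun t => ENNReal.ofReal (t ^ (a * (p - 1))) * φ t ^ p
  have htail : ∀ t ∈ Ioi (0 : ℝ), ψ t * ∫⁻ r in Ici t, ENNReal.ofReal (r ^ (a - 2))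
      = ENNReal.ofReal (1 / (1 - a)) * (ENNReal.ofReal (t ^ (a * p - 1)) * φ t ^ p) := by
    intro t (ht : 0 < t)
    have hint : -t ^ (a - 2 + 1) / (a - 2 + 1) = 1 / (1 - a) * t ^ (a - 1) := by
      rw [show a - 2 + 1 = a - 1 by ring]
      field_simp [(by linarith : a - 1 ≠ 0), (by linarith : 1 - a ≠ 0)]
      ring
    rw [setLIntegral_Ici_rpow (by linarith) ht, hint,
      show a * p - 1 = a * (p - 1) + (a - 1) by ring, Real.rpow_add ht,
      ENNReal.ofReal_mul (by positivity), ENNReal.ofReal_mul (by positivity)]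
    ring
  calc ∫⁻ r in Ioi 0, ENNReal.ofReal (r ^ (a * p - 1))
        * (ENNReal.ofReal (1 / r) * ∫⁻ t in Ioc 0 r, φ t) ^ p
      ≤ ∫⁻ r in Ioi 0, ENNReal.ofReal ((1 / (1 - a)) ^ (p - 1))
          * (ENNReal.ofReal (r ^ (a - 2)) * ∫⁻ t in Ioc 0 r, ψ t) :=
        setLIntegral_mono' measurableSet_Ioi fun r hr =>
          ofReal_rpow_mul_average_rpow_le ha hp hr hφ
    _ = ENNReal.ofReal ((1 / (1 - a)) ^ (p - 1)) * ∫⁻ t in Ioi 0,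
          ψ t * ∫⁻ r in Ici t, ENNReal.ofReal (r ^ (a - 2)) := by
        rw [lintegral_const_mul' _ _ ENNReal.ofReal_ne_top,
          lintegral_Ioi_mul_setLIntegral_Ioc (by fun_prop) (by fun_prop)]
    _ = ENNReal.ofReal ((1 / (1 - a)) ^ p)
          * ∫⁻ t in Ioi 0, ENNReal.ofReal (t ^ (a * p - 1)) * φ t ^ p := by
        rw [setLIntegral_congr_fun measurableSet_Ioi htail,
          lintegral_const_mul' _ _ ENNReal.ofReal_ne_top, ← mul_assoc,
          ← ENNReal.ofReal_mul (by positivity), ← Real.rpow_add_one (by positivity), sub_add_cancel]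

section Antitone

variable {φ : ℝ → ℝ≥0∞} {r s : ℝ}

theorem AntitoneOn.ofReal_mul_le_setLIntegral_Ioc (hφ : AntitoneOn φ (Ioi 0)) (hr : 0 < r) :
    ENNReal.ofReal r * φ r ≤ ∫⁻ t in Ioc 0 r, φ t := by
  calc ENNReal.ofReal r * φ r = ∫⁻ _ in Ioc 0 r, φ r := by
        rw [setLIntegral_const, Real.volume_Ioc, sub_zero, mul_comm]
    _ ≤ ∫⁻ t in Ioc 0 r, φ t :=
        setLIntegral_mono' measurableSet_Ioc fun t ht => hφ ht.1 hr ht.2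

theorem AntitoneOn.setLIntegral_Ioc_le_ofReal_mul (hφ : AntitoneOn φ (Ioi 0)) (hr : 0 < r) :
    ∫⁻ t in Ioc r s, φ t ≤ ENNReal.ofReal (s - r) * φ r := by
  calc ∫⁻ t in Ioc r s, φ t ≤ ∫⁻ _ in Ioc r s, φ r :=
        setLIntegral_mono' measurableSet_Ioc fun t ht => hφ hr (hr.trans ht.1) ht.1.le
    _ = ENNReal.ofReal (s - r) * φ r := by rw [setLIntegral_const, Real.volume_Ioc, mul_comm]

theorem AntitoneOn.ofReal_div_mul_setLIntegral_Ioc_le (hφ : AntitoneOn φ (Ioi 0)) (hr : 0 < r)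
    (hrs : r ≤ s) :
    ENNReal.ofReal (1 / s) * ∫⁻ t in Ioc 0 s, φ t
      ≤ ENNReal.ofReal (1 / r) * ∫⁻ t in Ioc 0 r, φ t := by
  set Φ := ∫⁻ t in Ioc 0 r, φ t
  have hs : 0 < s := hr.trans_le hrs
  have hcross : ENNReal.ofReal r * ∫⁻ t in Ioc 0 s, φ t ≤ ENNReal.ofReal s * Φ := by
    calc ENNReal.ofReal r * ∫⁻ t in Ioc 0 s, φ t
        = ENNReal.ofReal r * Φ + ENNReal.ofReal r * ∫⁻ t in Ioc r s, φ t := by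
          rw [← mul_add, ← lintegral_union measurableSet_Ioc (Ioc_disjoint_Ioc_of_le le_rfl),
            Ioc_union_Ioc_eq_Ioc hr.le hrs]
      _ ≤ ENNReal.ofReal r * Φ + ENNReal.ofReal (s - r) * (ENNReal.ofReal r * φ r) := by
          rw [mul_left_comm _ (ENNReal.ofReal r)]
          gcongr
          exact hφ.setLIntegral_Ioc_le_ofReal_mul hr
      _ ≤ ENNReal.ofReal r * Φ + ENNReal.ofReal (s - r) * Φ := by
          gcongr
          exact hφ.ofReal_mul_le_setLIntegral_Ioc hr
      _ = ENNReal.ofReal s * Φ := by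
          rw [← add_mul, ← ENNReal.ofReal_add hr.le (sub_nonneg.2 hrs), add_sub_cancel]
  have hinv : ∀ a b : ℝ, 0 < a → 0 < b →
      ENNReal.ofReal (1 / a) = ENNReal.ofReal (1 / (a * b)) * ENNReal.ofReal b := by
    intro a b ha hb
    rw [← ENNReal.ofReal_mul (by positivity)]
    congr 1
    field_simp
  calc ENNReal.ofReal (1 / s) * ∫⁻ t in Ioc 0 s, φ t
      = ENNReal.ofReal (1 / (s * r)) * (ENNReal.ofReal r * ∫⁻ t in Ioc 0 s, φ t) := by
        rw [hinv s r hs hr, mul_assoc]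
    _ ≤ ENNReal.ofReal (1 / (s * r)) * (ENNReal.ofReal s * Φ) := by gcongr
    _ = ENNReal.ofReal (1 / r) * Φ := by rw [hinv r s hr hs, mul_comm s r, mul_assoc]

theorem AntitoneOn.ofReal_min_mul_setLIntegral_Ioc_le (hφ : AntitoneOn φ (Ioi 0)) (hr : 0 < r)
    (hs : 0 < s) :
    ENNReal.ofReal (min (1 / r) (1 / s)) * ∫⁻ t in Ioc 0 s, φ t
      ≤ ENNReal.ofReal (1 / r) * ∫⁻ t in Ioc 0 r, φ t := by
  rcases le_total s r with hsr | hrs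
  · rw [min_eq_left (one_div_le_one_div_of_le hs hsr)]
    gcongr
  · rw [min_eq_right (one_div_le_one_div_of_le hr hrs)]
    exact hφ.ofReal_div_mul_setLIntegral_Ioc_le hr hrs

theorem AntitoneOn.iSup_ofReal_abs_min_mul_integral_le (hφ : AntitoneOn φ (Ioi 0)) {f : ℝ → ℝ}
    (hf : ∀ s, 0 < s → ∫⁻ t in Ioc 0 s, ENNReal.ofReal |f t| ≤ ∫⁻ t in Ioc 0 s, φ t)
    (hr : 0 < r) :
    ⨆ s ∈ Ioi (0 : ℝ), ENNReal.ofReal |min (1 / r) (1 / s) * ∫ t in Ioc 0 s, f t|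
      ≤ ENNReal.ofReal (1 / r) * ∫⁻ t in Ioc 0 r, φ t := by
  refine iSup₂_le fun s (hs : 0 < s) => ?_
  have hmin : 0 ≤ min (1 / r) (1 / s) := by positivity
  calc ENNReal.ofReal |min (1 / r) (1 / s) * ∫ t in Ioc 0 s, f t|
      = ENNReal.ofReal (min (1 / r) (1 / s)) * ‖∫ t in Ioc 0 s, f t‖ₑ := by
        rw [abs_mul, abs_of_nonneg hmin, ENNReal.ofReal_mul hmin, Real.enorm_eq_ofReal_abs]
    _ ≤ ENNReal.ofReal (min (1 / r) (1 / s)) * ∫⁻ t in Ioc 0 s, φ t := by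
        gcongr
        exact (enorm_integral_le_lintegral_enorm f).trans
          (by simpa only [Real.enorm_eq_ofReal_abs] using hf s hs)
    _ ≤ ENNReal.ofReal (1 / r) * ∫⁻ t in Ioc 0 r, φ t :=
        hφ.ofReal_min_mul_setLIntegral_Ioc_le hr hs

end Antitone

theorem key_corollary_general (N : ℕ) (hN : 1 ≤ N) (p : ℝ) (hp : (N : ℝ) < p)
    (f : ℝ → ℝ)
    (φ : ℝ → ℝ) (hφmeas : Measurable φ)
    (hφmono : ∀ t₁ t₂, 0 < t₁ → t₁ ≤ t₂ → φ t₂ ≤ φ t₁)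
    (hHL : ∀ s, 0 < s →
      ∫⁻ t in Ioc 0 s, ENNReal.ofReal |f t| ≤ ∫⁻ t in Ioc 0 s, ENNReal.ofReal (φ t)) :
    ∫⁻ r in Ioi (0 : ℝ), ENNReal.ofReal (r ^ ((N : ℝ) - 1)) *
        (⨆ s ∈ Ioi (0 : ℝ),
          ENNReal.ofReal |min (1 / r) (1 / s) * ∫ t in Ioc 0 s, f t|) ^ p
      ≤ ENNReal.ofReal ((p / (p - N)) ^ p) *
        ∫⁻ r in Ioi (0 : ℝ), ENNReal.ofReal (r ^ ((N : ℝ) - 1)) *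
          ENNReal.ofReal (φ r) ^ p := by
  have hp1 : 1 < p := lt_of_le_of_lt (Nat.one_le_cast.2 hN) hp
  have hφanti : AntitoneOn (fun t => ENNReal.ofReal (φ t)) (Ioi 0) :=
    fun t₁ ht₁ _ _ h => ENNReal.ofReal_le_ofReal (hφmono t₁ _ ht₁ h)
  calc _ ≤ ∫⁻ r in Ioi 0, ENNReal.ofReal (r ^ ((N : ℝ) - 1))
          * (ENNReal.ofReal (1 / r) * ∫⁻ t in Ioc 0 r, ENNReal.ofReal (φ t)) ^ p :=
        setLIntegral_mono' measurableSet_Ioi fun r (hr : 0 < r) =>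
          mul_le_mul_right (ENNReal.rpow_le_rpow
            (hφanti.iSup_ofReal_abs_min_mul_integral_le hHL hr) (by linarith)) _
    _ ≤ _ := lintegral_rpow_mul_average_rpow_le hp1 hp (by fun_prop)

/-- Weighted special case `g(r) = r^{N-1}`, `h(r) = r` of the key lemma:
for `1 ≤ N < p`, measurable `f` locally integrable near `0`, and nonnegative
non-increasing `φ` with `∫_0^s |f| ≤ ∫_0^s φ` for all `s > 0`,
`∫_0^∞ r^{N-1} (sup_{s>0} |min{1/r,1/s} ∫_0^s f|)^p dr
  ≤ (p/(p-N))^p ∫_0^∞ r^{N-1} φ(r)^p dr`. -/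
theorem key_corollary (N : ℕ) (hN : 1 ≤ N) (p : ℝ) (hp : (N : ℝ) < p)
    (f : ℝ → ℝ) (hf : Measurable f)
    (hfint : ∀ s, 0 < s → IntegrableOn f (Ioc 0 s))
    (φ : ℝ → ℝ) (hφmeas : Measurable φ)
    (hφ0 : ∀ t, 0 < t → 0 ≤ φ t)
    (hφmono : ∀ t₁ t₂, 0 < t₁ → t₁ ≤ t₂ → φ t₂ ≤ φ t₁)
    (hHL : ∀ s, 0 < s →
      ∫⁻ t in Ioc 0 s, ENNReal.ofReal |f t| ≤ ∫⁻ t in Ioc 0 s, ENNReal.ofReal (φ t)) :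
    ∫⁻ r in Ioi (0 : ℝ), ENNReal.ofReal (r ^ ((N : ℝ) - 1)) *
        (⨆ s ∈ Ioi (0 : ℝ),
          ENNReal.ofReal |min (1 / r) (1 / s) * ∫ t in Ioc 0 s, f t|) ^ p
      ≤ ENNReal.ofReal ((p / (p - N)) ^ p) *
        ∫⁻ r in Ioi (0 : ℝ), ENNReal.ofReal (r ^ ((N : ℝ) - 1)) *
          ENNReal.ofReal (φ r) ^ p :=
  key_corollary_general N hN p hp f φ hφmeas hφmono hHL
end

section
/- Let N ≥ 1 be an integer and 1 < p < ∞. Let u : ℝ^N → ℝ be continuously differentiable, let f : ℝ^N → [0,∞) be a nonnegative measurable radial function, and define the radialisation ũ(x) = ( (1/ω_N) ∫_{S^{N−1}} |u(‖x‖σ)|^p dσ )^{1/p} for x ≠ 0. Assume ũ is differentiable on ℝ^N \ {0}. Then ∫_{ℝ^N} f(x) · | (x/‖x‖) · ∇ũ(x) |^p dx ≤ ∫_{ℝ^N} f(x) · | (x/‖x‖) · ∇u(x) |^p dx. -/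
/-! The radial profile `g(r) = ω_N^{-1/p} ‖u(r·)‖_{L^p(S^{N-1})}` of `ũ` is, up to the constant,
the norm of the curve `t ↦ u(t·)` in `C(S^{N-1}) ⊆ L^p(S^{N-1})`, whose derivative at `r` is the
radial derivative `σ ↦ ∂_r u(rσ)`. A norm is 1-Lipschitz, so `ω_N |g'(r)|^p ≤ ∫ |∂_r u(rσ)|^p dσ`;
integrating this against `f(r) r^{N-1} dr` in polar coordinates gives the inequality. -/

open MeasureTheory Metric Set
open scoped ENNReal RealInnerProductSpace

/-- The surface measure on the unit sphere `S^{N-1} ⊆ ℝ^N`. -/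
noncomputable def sphereMeasure (N : ℕ) :
    Measure (sphere (0 : EuclideanSpace ℝ (Fin N)) 1) :=
  (volume : Measure (EuclideanSpace ℝ (Fin N))).toSphere

/-- `ω_N`, the total surface area of the unit sphere `S^{N-1} ⊆ ℝ^N`. -/
noncomputable def sphereArea (N : ℕ) : ℝ := (sphereMeasure N univ).toReal

open Filter

theorem abs_le_mul_norm_of_hasDerivAt_mul_norm {F : Type*} [NormedAddCommGroup F]
    [NormedSpace ℝ F] {φ : ℝ → F} {φ' : F} {c d r : ℝ} (hc : 0 ≤ c)
    (hφ : HasDerivAt φ φ' r) (hd : HasDerivAt (fun t => c * ‖φ t‖) d r) :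
    |d| ≤ c * ‖φ'‖ := by
  rw [hasDerivAt_iff_tendsto_slope] at hφ hd
  refine le_of_tendsto_of_tendsto hd.abs (hφ.norm.const_mul c) (Eventually.of_forall fun t => ?_)
  simp only [slope_def_module, smul_eq_mul, abs_mul, norm_smul, Real.norm_eq_abs, ← mul_sub]
  rw [abs_of_nonneg hc, mul_left_comm]
  gcongr
  exact abs_norm_sub_norm_le _ _

section UniformDifferentiability

variable {E F : Type*} [NormedAddCommGroup E] [NormedSpace ℝ E] [NormedAddCommGroup F]
  [NormedSpace ℝ F] {u : E → F}

theorem IsCompact.exists_forall_norm_sub_fderiv_le (hu : ContDiff ℝ 1 u) {S : Set E}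
    (hS : IsCompact S) {ε : ℝ} (hε : 0 < ε) :
    ∃ δ > 0, ∀ x ∈ S, ∀ y, ‖y - x‖ < δ →
      ‖u y - u x - fderiv ℝ u x (y - x)‖ ≤ ε * ‖y - x‖ := by
  have hDu := hu.continuous_fderiv one_ne_zero
  obtain ⟨δ, hδ, hclose⟩ := Metric.mem_uniformity_dist.1 <|
    hS.uniformContinuousAt_of_continuousAt (fderiv ℝ u) (fun x _ => hDu.continuousAt)
      (Metric.dist_mem_uniformity hε)
  refine ⟨δ, hδ, fun x hx y hy => ?_⟩
  refine (convex_ball x δ).norm_image_sub_le_of_norm_fderiv_le'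
    (fun z _ => (hu.differentiable one_ne_zero) z) (fun z hz => ?_) (mem_ball_self hδ)
    (mem_ball_iff_norm.2 hy)
  rw [← dist_eq_norm, dist_comm]
  exact (hclose (mem_ball.1 hz |>.trans_eq' (dist_comm _ _)) hx).le

variable {K : Type*} [TopologicalSpace K] [CompactSpace K]

theorem ContDiff.hasDerivAt_continuousMap_comp_smul (hu : ContDiff ℝ 1 u) (γ : C(K, E))
    (r : ℝ) :
    HasDerivAt (fun t : ℝ => (⟨u, hu.continuous⟩ : C(E, F)).comp (t • γ))
      ⟨fun σ => fderiv ℝ u (r • γ σ) (γ σ),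
        ((hu.continuous_fderiv one_ne_zero).comp (continuous_const.smul γ.continuous)).clm_apply
          γ.continuous⟩ r := by
  rw [hasDerivAt_iff_isLittleO, Asymptotics.isLittleO_iff]
  intro c hc
  have hγ : 0 < ‖γ‖ + 1 := by positivity
  obtain ⟨δ, hδ, htaylor⟩ := (isCompact_range (r • γ).continuous).exists_forall_norm_sub_fderiv_le
    hu (ε := c / (‖γ‖ + 1)) (by positivity)
  filter_upwards [Metric.ball_mem_nhds r (div_pos hδ hγ)] with t ht
  rw [mem_ball, Real.dist_eq, lt_div_iff₀ hγ] at ht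
  refine (ContinuousMap.norm_le _ (by positivity)).2 fun σ => ?_
  have hdiff : t • γ σ - r • γ σ = (t - r) • γ σ := (sub_smul _ _ _).symm
  have hσ : ‖(t - r) • γ σ‖ ≤ |t - r| * (‖γ‖ + 1) := by
    rw [norm_smul, Real.norm_eq_abs]
    gcongr
    linarith [γ.norm_coe_le_norm σ]
  have := htaylor (r • γ σ) ⟨σ, rfl⟩ (t • γ σ) (hdiff ▸ hσ.trans_lt ht)
  simp only [ContinuousMap.sub_apply, ContinuousMap.comp_apply, ContinuousMap.smul_apply,
    ContinuousMap.coe_mk, Real.norm_eq_abs]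
  rw [hdiff, map_smul] at this
  calc _ ≤ c / (‖γ‖ + 1) * ‖(t - r) • γ σ‖ := this
    _ ≤ c / (‖γ‖ + 1) * (|t - r| * (‖γ‖ + 1)) := by gcongr
    _ = c * |t - r| := by field_simp

end UniformDifferentiability

section LpNormOfSlices

variable {K : Type*} [TopologicalSpace K] [CompactSpace K] [MeasurableSpace K] [BorelSpace K]
  {ν : Measure K} [IsFiniteMeasure ν]

theorem ContinuousMap.norm_toLp_eq_integral_rpow {p : ℝ≥0∞} [Fact (1 ≤ p)] (hp : p ≠ ∞)
    (f : C(K, ℝ)) :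
    ‖toLp p ν ℝ f‖ = (∫ σ, |f σ| ^ p.toReal ∂ν) ^ (1 / p.toReal) := by
  have hp0 : p ≠ 0 := (zero_lt_one.trans_le Fact.out).ne'
  rw [Lp.norm_def, eLpNorm_congr_ae (ContinuousMap.coeFn_toLp (𝕜 := ℝ) ν f),
    (f.memLp ν ℝ).eLpNorm_eq_integral_rpow_norm hp0 hp, ENNReal.toReal_ofReal (by positivity)]
  simp [one_div]

theorem abs_rpow_le_of_hasDerivAt_rpow_integral_comp_smul {E : Type*} [NormedAddCommGroup E]
    [NormedSpace ℝ E] {p c d r : ℝ} (hp : 1 ≤ p) (hc : 0 ≤ c) {u : E → ℝ}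
    (hu : ContDiff ℝ 1 u) (γ : C(K, E))
    (hd : HasDerivAt (fun t => (c * ∫ σ, |u (t • γ σ)| ^ p ∂ν) ^ (1 / p)) d r) :
    |d| ^ p ≤ c * ∫ σ, |fderiv ℝ u (r • γ σ) (γ σ)| ^ p ∂ν := by
  have : Fact (1 ≤ ENNReal.ofReal p) := ⟨by simpa using hp⟩
  have hp' : (ENNReal.ofReal p).toReal = p := ENNReal.toReal_ofReal (by linarith)
  have hnorm (f : C(K, ℝ)) : (c * ∫ σ, |f σ| ^ p ∂ν) ^ (1 / p)
      = c ^ (1 / p) * ‖ContinuousMap.toLp (ENNReal.ofReal p) ν ℝ f‖ := by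
    rw [ContinuousMap.norm_toLp_eq_integral_rpow ENNReal.ofReal_ne_top, hp',
      Real.mul_rpow hc (integral_nonneg fun σ => by positivity)]
  have hΦ := (ContinuousMap.toLp (ENNReal.ofReal p) ν ℝ).hasFDerivAt.comp_hasDerivAt r
    (hu.hasDerivAt_continuousMap_comp_smul γ r)
  have hd_le := abs_le_mul_norm_of_hasDerivAt_mul_norm (c := c ^ (1 / p)) (by positivity) hΦ
    (hd.congr_of_eventuallyEq (Eventually.of_forall fun t => (hnorm _).symm))
  calc |d| ^ p ≤ ((c * ∫ σ, |fderiv ℝ u (r • γ σ) (γ σ)| ^ p ∂ν) ^ (1 / p)) ^ p := by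
        gcongr
        exact hd_le.trans_eq (hnorm _).symm
    _ = c * ∫ σ, |fderiv ℝ u (r • γ σ) (γ σ)| ^ p ∂ν := by
        rw [← Real.rpow_mul (by positivity), one_div_mul_cancel (by linarith), Real.rpow_one]

end LpNormOfSlices

section Radial

variable {E : Type*} [NormedAddCommGroup E] [NormedSpace ℝ E]

theorem hasDerivAt_fderiv_apply_of_eq_comp_norm {w : E → ℝ} {g : ℝ → ℝ}
    (hwg : ∀ x ≠ 0, w x = g ‖x‖) {σ : E} (hσ : ‖σ‖ = 1) {r : ℝ} (hr : 0 < r)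
    (hw : DifferentiableAt ℝ w (r • σ)) : HasDerivAt g (fderiv ℝ w (r • σ) σ) r := by
  have hline : HasDerivAt (fun t : ℝ => w (t • σ)) (fderiv ℝ w (r • σ) σ) r := by
    have hsmul := (hasDerivAt_id r).smul_const σ
    rw [one_smul] at hsmul
    exact hw.hasFDerivAt.comp_hasDerivAt r hsmul
  refine hline.congr_of_eventuallyEq ?_
  filter_upwards [Ioi_mem_nhds hr] with t ht
  have hσ0 : σ ≠ 0 := norm_ne_zero_iff.1 (hσ ▸ one_ne_zero)
  rw [hwg _ (smul_ne_zero ht.ne' hσ0), norm_smul, hσ, mul_one, Real.norm_of_nonneg ht.out.le]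

variable [MeasurableSpace E] [BorelSpace E]

theorem lintegral_eq_lintegral_volumeIoiPow_toSphere [Nontrivial E] [FiniteDimensional ℝ E]
    (μ : Measure E) [μ.IsAddHaarMeasure] {Φ : E → ℝ≥0∞} (hΦ : Measurable Φ) :
    ∫⁻ x, Φ x ∂μ = ∫⁻ r : Ioi (0 : ℝ), ∫⁻ σ : sphere (0 : E) 1, Φ ((r : ℝ) • (σ : E)) ∂μ.toSphere
      ∂(Measure.volumeIoiPow (Module.finrank ℝ E - 1)) := by
  have hΦpolar : Measurable fun y : sphere (0 : E) 1 × Ioi (0 : ℝ) => Φ ((y.2 : ℝ) • (y.1 : E)) :=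
    hΦ.comp ((measurable_subtype_coe.comp measurable_snd).smul
      (measurable_subtype_coe.comp measurable_fst))
  have hpunctured : ∫⁻ x, Φ x ∂μ = ∫⁻ x : ({0}ᶜ : Set E), Φ x ∂(μ.comap Subtype.val) := by
    rw [lintegral_subtype_comap (measurableSet_singleton 0).compl, restrict_compl_singleton]
  rw [hpunctured, ← lintegral_prod_symm _ hΦpolar.aemeasurable,
    ← (μ.measurePreserving_homeomorphUnitSphereProd).lintegral_comp hΦpolar]
  refine lintegral_congr fun x => ?_
  simp [smul_inv_smul₀ (norm_ne_zero_iff.2 x.2)]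

/-- In the notation of the theorem, `ũ x = radialProfile (sphereMeasure N) p u ‖x‖`. -/
noncomputable def radialProfile (ν : Measure (sphere (0 : E) 1)) (p : ℝ) (u : E → ℝ) (t : ℝ) :
    ℝ :=
  ((1 / (ν univ).toReal) * ∫ σ, |u (t • (σ : E))| ^ p ∂ν) ^ (1 / p)

theorem mul_abs_rpow_le_integral_of_hasDerivAt_radialProfile [ProperSpace E]
    (ν : Measure (sphere (0 : E) 1)) [IsFiniteMeasure ν] {p d r : ℝ} (hp : 1 ≤ p) {u : E → ℝ}
    (hu : ContDiff ℝ 1 u) (hd : HasDerivAt (radialProfile ν p u) d r) :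
    (ν univ).toReal * |d| ^ p ≤ ∫ σ, |fderiv ℝ u (r • (σ : E)) σ| ^ p ∂ν := by
  set ω := (ν univ).toReal
  have hI : 0 ≤ ∫ σ, |fderiv ℝ u (r • (σ : E)) σ| ^ p ∂ν := integral_nonneg fun σ => by positivity
  calc ω * |d| ^ p ≤ ω * (1 / ω * ∫ σ, |fderiv ℝ u (r • (σ : E)) σ| ^ p ∂ν) := by
        gcongr
        exact abs_rpow_le_of_hasDerivAt_rpow_integral_comp_smul hp (by positivity) hu
          ⟨Subtype.val, continuous_subtype_val⟩ hd
    _ ≤ ∫ σ, |fderiv ℝ u (r • (σ : E)) σ| ^ p ∂ν := by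
        rw [← mul_assoc, mul_one_div]
        exact mul_le_of_le_one_left hI (div_self_le_one ω)

theorem lintegral_fderiv_rpow_le_of_eq_radialProfile [Nontrivial E] [ProperSpace E]
    (ν : Measure (sphere (0 : E) 1)) [IsFiniteMeasure ν] {p : ℝ} (hp : 1 ≤ p) {u w : E → ℝ}
    (hu : ContDiff ℝ 1 u) (hw : ∀ x ≠ 0, w x = radialProfile ν p u ‖x‖)
    (hwd : ∀ x ≠ 0, DifferentiableAt ℝ w x) {r : ℝ} (hr : 0 < r) :
    ∫⁻ σ, ENNReal.ofReal (|fderiv ℝ w (r • (σ : E)) σ| ^ p) ∂ν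
      ≤ ∫⁻ σ, ENNReal.ofReal (|fderiv ℝ u (r • (σ : E)) σ| ^ p) ∂ν := by
  set g := radialProfile ν p u
  have hg (σ : sphere (0 : E) 1) : HasDerivAt g (fderiv ℝ w (r • (σ : E)) σ) r :=
    hasDerivAt_fderiv_apply_of_eq_comp_norm hw (norm_eq_of_mem_sphere σ) hr
      (hwd _ (smul_ne_zero hr.ne' (ne_zero_of_mem_unit_sphere σ)))
  obtain ⟨σ₀⟩ : Nonempty (sphere (0 : E) 1) :=
    (NormedSpace.sphere_nonempty.2 zero_le_one).to_subtype
  have hcont : Continuous fun σ : sphere (0 : E) 1 => |fderiv ℝ u (r • (σ : E)) σ| ^ p :=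
    (((hu.continuous_fderiv one_ne_zero).comp (continuous_const.smul continuous_subtype_val)
      ).clm_apply continuous_subtype_val).abs.rpow_const fun _ => Or.inr (by linarith)
  calc ∫⁻ σ, ENNReal.ofReal (|fderiv ℝ w (r • (σ : E)) σ| ^ p) ∂ν
      = ∫⁻ _σ, ENNReal.ofReal (|deriv g r| ^ p) ∂ν :=
        lintegral_congr fun σ => by rw [(hg σ).deriv]
    _ = ENNReal.ofReal ((ν univ).toReal * |deriv g r| ^ p) := by
        rw [lintegral_const, mul_comm, ENNReal.ofReal_mul ENNReal.toReal_nonneg,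
          ENNReal.ofReal_toReal (measure_ne_top _ _)]
    _ ≤ ENNReal.ofReal (∫ σ, |fderiv ℝ u (r • (σ : E)) σ| ^ p ∂ν) :=
        ENNReal.ofReal_le_ofReal <| mul_abs_rpow_le_integral_of_hasDerivAt_radialProfile ν hp hu
          (hg σ₀).differentiableAt.hasDerivAt
    _ = _ := ofReal_integral_eq_lintegral_ofReal
        (hcont.integrable_of_hasCompactSupport (HasCompactSupport.of_compactSpace _))
        (ae_of_all _ fun σ => by positivity)

end Radial

theorem measurable_ofReal_mul_ofReal_inner_gradient {E : Type*} [NormedAddCommGroup E]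
    [InnerProductSpace ℝ E] [FiniteDimensional ℝ E] [MeasurableSpace E] [BorelSpace E]
    {f : ℝ → ℝ} (hf : Measurable f) (w : E → ℝ) (p : ℝ) :
    Measurable fun x : E =>
      ENNReal.ofReal (f ‖x‖) * ENNReal.ofReal (|⟪‖x‖⁻¹ • x, gradient w x⟫| ^ p) := by
  have : Measurable (gradient w) :=
    (InnerProductSpace.toDual ℝ E).symm.continuous.measurable.comp (measurable_fderiv ℝ w)
  fun_prop

theorem radialisation_lemma_general (N : ℕ) (hN : 1 ≤ N) (p : ℝ) (hp : 1 < p)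
    (u : EuclideanSpace ℝ (Fin N) → ℝ) (hu : ContDiff ℝ 1 u)
    (f : ℝ → ℝ) (hf : Measurable f)
    (util : EuclideanSpace ℝ (Fin N) → ℝ)
    (hutil : ∀ x : EuclideanSpace ℝ (Fin N), x ≠ 0 →
      util x = ((1 / sphereArea N) *
        ∫ σ : sphere (0 : EuclideanSpace ℝ (Fin N)) 1,
          |u (‖x‖ • (σ : EuclideanSpace ℝ (Fin N)))| ^ p ∂(sphereMeasure N)) ^ (1 / p))
    (hdiff : ∀ x : EuclideanSpace ℝ (Fin N), x ≠ 0 → DifferentiableAt ℝ util x) :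
    ∫⁻ x : EuclideanSpace ℝ (Fin N),
        ENNReal.ofReal (f ‖x‖) * ENNReal.ofReal (|⟪‖x‖⁻¹ • x, gradient util x⟫| ^ p)
      ≤ ∫⁻ x : EuclideanSpace ℝ (Fin N),
          ENNReal.ofReal (f ‖x‖) * ENNReal.ofReal (|⟪‖x‖⁻¹ • x, gradient u x⟫| ^ p) := by
  have : Nontrivial (EuclideanSpace ℝ (Fin N)) :=
    Module.nontrivial_of_finrank_pos (R := ℝ) (by rwa [finrank_euclideanSpace_fin])
  have : IsFiniteMeasure (sphereMeasure N) := by unfold sphereMeasure; infer_instance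
  rw [lintegral_eq_lintegral_volumeIoiPow_toSphere volume
      (measurable_ofReal_mul_ofReal_inner_gradient hf util p),
    lintegral_eq_lintegral_volumeIoiPow_toSphere volume
      (measurable_ofReal_mul_ofReal_inner_gradient hf u p)]
  refine lintegral_mono fun r => ?_
  have hr : (0 : ℝ) < r := r.2
  have hnorm (σ : sphere (0 : EuclideanSpace ℝ (Fin N)) 1) :
      ‖(r : ℝ) • (σ : EuclideanSpace ℝ (Fin N))‖ = r := by
    rw [norm_smul, norm_eq_of_mem_sphere σ, mul_one, Real.norm_of_nonneg hr.le]
  simp_rw [hnorm, inv_smul_smul₀ hr.ne', inner_gradient_right, RCLike.conj_to_real,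
    lintegral_const_mul' _ _ ENNReal.ofReal_ne_top]
  exact mul_le_mul_right
    (lintegral_fderiv_rpow_le_of_eq_radialProfile (sphereMeasure N) hp.le hu hutil hdiff hr) _

/-- Radialisation lemma: for `1 < p < ∞`, a nonnegative measurable radial weight
`x ↦ f(‖x‖)`, a `C¹` function `u` and its radialisation
`ũ(x) = ((1/ω_N) ∫_{S^{N-1}} |u(‖x‖σ)|^p dσ)^{1/p}` (assumed differentiable away
from the origin), one has
`∫ f(‖x‖) |(x/‖x‖)·∇ũ(x)|^p dx ≤ ∫ f(‖x‖) |(x/‖x‖)·∇u(x)|^p dx`. -/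
theorem radialisation_lemma (N : ℕ) (hN : 1 ≤ N) (p : ℝ) (hp : 1 < p)
    (u : EuclideanSpace ℝ (Fin N) → ℝ) (hu : ContDiff ℝ 1 u)
    (f : ℝ → ℝ) (hf : Measurable f) (hf0 : ∀ r, 0 ≤ r → 0 ≤ f r)
    (util : EuclideanSpace ℝ (Fin N) → ℝ)
    (hutil : ∀ x : EuclideanSpace ℝ (Fin N), x ≠ 0 →
      util x = ((1 / sphereArea N) *
        ∫ σ : sphere (0 : EuclideanSpace ℝ (Fin N)) 1,
          |u (‖x‖ • (σ : EuclideanSpace ℝ (Fin N)))| ^ p ∂(sphereMeasure N)) ^ (1 / p))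
    (hdiff : ∀ x : EuclideanSpace ℝ (Fin N), x ≠ 0 → DifferentiableAt ℝ util x) :
    ∫⁻ x : EuclideanSpace ℝ (Fin N),
        ENNReal.ofReal (f ‖x‖) * ENNReal.ofReal (|⟪‖x‖⁻¹ • x, gradient util x⟫| ^ p)
      ≤ ∫⁻ x : EuclideanSpace ℝ (Fin N),
          ENNReal.ofReal (f ‖x‖) * ENNReal.ofReal (|⟪‖x‖⁻¹ • x, gradient u x⟫| ^ p) :=
  radialisation_lemma_general N hN p hp u hu f hf util hutil hdiff
end

section
/- Let N ≥ 1 be an integer, 1 < p < ∞, and let u : ℝ^N → ℝ be continuously differentiable. For r > 0 set R(r) = ( (1/ω_N) ∫_{S^{N−1}} |u(rσ)|^p dσ )^{1/p}. If R is differentiable at r > 0, then |R′(r)|^p ≤ (1/ω_N) ∫_{S^{N−1}} | σ · ∇u(rσ) |^p dσ. -/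
open MeasureTheory Metric Set
open scoped ENNReal RealInnerProductSpace

/-!
Up to the factor `ω_N^{-1/p}`, `R(s)` is the `Lᵖ`-norm of the restriction of `u(s ·)` to the
sphere. As a curve in `C(S^{N-1}, ℝ)` with the sup norm, `s ↦ u(s ·)` is differentiable
with derivative `σ ↦ σ · ∇u(rσ)` by a uniform mean value estimate, hence so is its image
in `Lᵖ`.
Since the norm is `1`-Lipschitz, the difference quotients of `R` are dominated by those of this
curve, which gives `|R'(r)| ≤ ω_N^{-1/p} ‖σ · ∇u(rσ)‖_p`.
-/

open Filter Topology

theorem norm_deriv_le_of_norm_sub_le {E G : Type*} [NormedAddCommGroup E] [NormedSpace ℝ E]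
    [NormedAddCommGroup G] [NormedSpace ℝ G] {F : ℝ → E} {F' : E} {R : ℝ → G} {r c : ℝ}
    (hc : 0 ≤ c) (hF : HasDerivAt F F' r)
    (hR : ∀ᶠ s in 𝓝 r, ‖R s - R r‖ ≤ c * ‖F s - F r‖) :
    ‖deriv R r‖ ≤ c * ‖F'‖ := by
  by_cases hd : DifferentiableAt ℝ R r
  · refine le_of_tendsto_of_tendsto (hasDerivAt_iff_tendsto_slope.1 hd.hasDerivAt).norm
      ((hasDerivAt_iff_tendsto_slope.1 hF).norm.const_mul c) ?_
    filter_upwards [hR.filter_mono nhdsWithin_le_nhds] with s hs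
    simp only [slope_def_module, norm_smul, mul_left_comm c]
    exact mul_le_mul_of_nonneg_left hs (norm_nonneg _)
  · rw [deriv_zero_of_not_differentiableAt hd, norm_zero]
    positivity

theorem ContinuousMap.hasDerivAt_of_continuousAt_deriv {X E : Type*} [TopologicalSpace X]
    [CompactSpace X] [NormedAddCommGroup E] [NormedSpace ℝ E] {F F' : ℝ → C(X, E)} {r : ℝ}
    (hF : ∀ t x, HasDerivAt (fun t ↦ F t x) (F' t x) t) (hF' : ContinuousAt F' r) :
    HasDerivAt F (F' r) r := by
  rw [hasDerivAt_iff_isLittleO, Asymptotics.isLittleO_iff]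
  intro ε hε
  obtain ⟨δ, hδ, hF'δ⟩ := Metric.continuousAt_iff.1 hF' ε hε
  filter_upwards [Metric.ball_mem_nhds r hδ] with s hs
  refine (ContinuousMap.norm_le _ (by positivity)).2 fun x ↦ ?_
  have hderiv : ∀ t, HasDerivAt (fun t ↦ F t x - (t - r) • F' r x) (F' t x - F' r x) t :=
    fun t ↦ by simpa using (hF t x).fun_sub (((hasDerivAt_id t).sub_const r).smul_const (F' r x))
  have hbound : ∀ t ∈ ball r δ, ‖F' t x - F' r x‖ ≤ ε := fun t ht ↦
    ((F' t - F' r).norm_coe_le_norm x).trans (dist_eq_norm (F' t) (F' r) ▸ (hF'δ ht).le)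
  have hmvt := (convex_ball r δ).norm_image_sub_le_of_norm_hasDerivWithin_le
    (fun t _ ↦ (hderiv t).hasDerivWithinAt) hbound (mem_ball_self hδ) hs
  simpa [sub_sub, add_comm] using hmvt

theorem DifferentiableAt.hasDerivAt_comp_smul {E : Type*} [NormedAddCommGroup E]
    [NormedSpace ℝ E] {u : E → ℝ} {x : E} {t : ℝ} (hu : DifferentiableAt ℝ u (t • x)) :
    HasDerivAt (fun t : ℝ ↦ u (t • x)) (fderiv ℝ u (t • x) x) t := by
  have := hu.hasFDerivAt.comp_hasDerivAt t ((hasDerivAt_id t).smul_const x)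
  rwa [one_smul] at this

theorem ContDiff.hasDerivAt_comp_smul_continuousMap {X E : Type*} [TopologicalSpace X]
    [CompactSpace X] [NormedAddCommGroup E] [NormedSpace ℝ E] {u : E → ℝ}
    (hu : ContDiff ℝ 1 u) (ι : C(X, E)) (r : ℝ) :
    HasDerivAt (fun s ↦ (⟨u, hu.continuous⟩ : C(E, ℝ)).comp (s • ι))
      ⟨fun x ↦ fderiv ℝ u (r • ι x) (ι x), (hu.continuous_fderiv_apply one_ne_zero).comp
        (show Continuous fun x ↦ (r • ι x, ι x) by fun_prop)⟩ r := by
  let F' : C(ℝ, C(X, ℝ)) := ContinuousMap.curry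
    ⟨fun z ↦ fderiv ℝ u (z.1 • ι z.2) (ι z.2),
      (hu.continuous_fderiv_apply one_ne_zero).comp
        (show Continuous fun z : ℝ × X ↦ (z.1 • ι z.2, ι z.2) by fun_prop)⟩
  exact ContinuousMap.hasDerivAt_of_continuousAt_deriv (F' := F')
    (fun t x ↦ (hu.differentiable one_ne_zero _).hasDerivAt_comp_smul)
    F'.continuous.continuousAt

theorem ContinuousMap.norm_toLp_rpow {X E : Type*} [TopologicalSpace X] [MeasurableSpace X]
    [BorelSpace X] [CompactSpace X] [NormedAddCommGroup E] [NormedSpace ℝ E]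
    [SecondCountableTopologyEither X E] {μ : Measure X} [IsFiniteMeasure μ] {p : ℝ} (hp : 0 < p)
    [Fact (1 ≤ ENNReal.ofReal p)] (f : C(X, E)) :
    ‖toLp (E := E) (ENNReal.ofReal p) μ ℝ f‖ ^ p = ∫ x, ‖f x‖ ^ p ∂μ := by
  rw [Lp.norm_def, eLpNorm_congr_ae (coeFn_toLp (𝕜 := ℝ) μ f),
    MemLp.eLpNorm_eq_integral_rpow_norm (by simpa using hp) ENNReal.ofReal_ne_top
      (f.memLp μ ℝ), ENNReal.toReal_ofReal hp.le,
    ENNReal.toReal_ofReal (by positivity),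
    Real.rpow_inv_rpow (integral_nonneg fun _ ↦ by positivity) hp.ne']

instance isFiniteMeasure_sphereMeasure (N : ℕ) : IsFiniteMeasure (sphereMeasure N) := by
  unfold sphereMeasure; infer_instance

theorem radialisation_pointwise_general (N : ℕ) (p : ℝ) (hp : 1 < p)
    (u : EuclideanSpace ℝ (Fin N) → ℝ) (hu : ContDiff ℝ 1 u)
    (R : ℝ → ℝ)
    (hR : ∀ r : ℝ, 0 < r →
      R r = ((1 / sphereArea N) *
        ∫ σ : sphere (0 : EuclideanSpace ℝ (Fin N)) 1,
          |u (r • (σ : EuclideanSpace ℝ (Fin N)))| ^ p ∂(sphereMeasure N)) ^ (1 / p))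
    (r : ℝ) (hr : 0 < r) :
    |deriv R r| ^ p ≤ (1 / sphereArea N) *
      ∫ σ : sphere (0 : EuclideanSpace ℝ (Fin N)) 1,
        |⟪(σ : EuclideanSpace ℝ (Fin N)),
          gradient u (r • (σ : EuclideanSpace ℝ (Fin N)))⟫| ^ p ∂(sphereMeasure N) := by
  have hp0 : 0 < p := zero_lt_one.trans hp
  have : Fact (1 ≤ ENNReal.ofReal p) := ⟨ENNReal.one_le_ofReal.2 hp.le⟩
  let T := ContinuousMap.toLp (E := ℝ) (ENNReal.ofReal p) (sphereMeasure N) ℝ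
  let ι : C(sphere (0 : EuclideanSpace ℝ (Fin N)) 1, EuclideanSpace ℝ (Fin N)) :=
    ⟨(↑), continuous_subtype_val⟩
  let F : ℝ → C(sphere (0 : EuclideanSpace ℝ (Fin N)) 1, ℝ) := fun s ↦
    (⟨u, hu.continuous⟩ : C(EuclideanSpace ℝ (Fin N), ℝ)).comp (s • ι)
  have hF := hu.hasDerivAt_comp_smul_continuousMap ι r
  have hω : 0 ≤ 1 / sphereArea N := by unfold sphereArea; positivity
  set c := (1 / sphereArea N) ^ (1 / p) with hc_def
  have hc : 0 ≤ c := Real.rpow_nonneg hω _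
  have hcp : c ^ p = 1 / sphereArea N := by rw [hc_def, one_div p, Real.rpow_inv_rpow hω hp0.ne']
  have hRT : ∀ s, 0 < s → R s = c * ‖T (F s)‖ := fun s hs ↦ by
    have hnorm : ‖T (F s)‖ = (‖T (F s)‖ ^ p) ^ (1 / p) := by
      rw [one_div, Real.rpow_rpow_inv (norm_nonneg _) hp0.ne']
    rw [hR s hs, hnorm, ContinuousMap.norm_toLp_rpow hp0,
      ← Real.mul_rpow hω (integral_nonneg fun _ ↦ by positivity)]
    rfl
  have hderiv : |deriv R r| ≤ c * ‖T (deriv F r)‖ := by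
    rw [← Real.norm_eq_abs]
    refine norm_deriv_le_of_norm_sub_le hc
      (T.hasFDerivAt.comp_hasDerivAt r hF.differentiableAt.hasDerivAt) ?_
    filter_upwards [lt_mem_nhds hr] with s hs
    rw [hRT s hs, hRT r hr, ← mul_sub, norm_mul, Real.norm_of_nonneg hc, Function.comp_apply,
      Function.comp_apply, ← map_sub]
    gcongr
    exact abs_norm_sub_norm_le _ _
  calc |deriv R r| ^ p ≤ (c * ‖T (deriv F r)‖) ^ p := by gcongr
    _ = _ := by
      rw [Real.mul_rpow hc (norm_nonneg _), hcp, ContinuousMap.norm_toLp_rpow hp0, hF.deriv]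
      simp [ι, inner_gradient_right]

/-- Pointwise Hölder estimate at the core of the radialisation lemma: for a `C¹`
function `u` on `ℝ^N` and `R(r) = ((1/ω_N) ∫_{S^{N-1}} |u(rσ)|^p dσ)^{1/p}`, if `R`
is differentiable at `r > 0` then
`|R'(r)|^p ≤ (1/ω_N) ∫_{S^{N-1}} |σ·∇u(rσ)|^p dσ`. -/
theorem radialisation_pointwise (N : ℕ) (hN : 1 ≤ N) (p : ℝ) (hp : 1 < p)
    (u : EuclideanSpace ℝ (Fin N) → ℝ) (hu : ContDiff ℝ 1 u)
    (R : ℝ → ℝ)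
    (hR : ∀ r : ℝ, 0 < r →
      R r = ((1 / sphereArea N) *
        ∫ σ : sphere (0 : EuclideanSpace ℝ (Fin N)) 1,
          |u (r • (σ : EuclideanSpace ℝ (Fin N)))| ^ p ∂(sphereMeasure N)) ^ (1 / p))
    (r : ℝ) (hr : 0 < r) (hdiff : DifferentiableAt ℝ R r) :
    |deriv R r| ^ p ≤ (1 / sphereArea N) *
      ∫ σ : sphere (0 : EuclideanSpace ℝ (Fin N)) 1,
        |⟪(σ : EuclideanSpace ℝ (Fin N)),
          gradient u (r • (σ : EuclideanSpace ℝ (Fin N)))⟫| ^ p ∂(sphereMeasure N) :=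
  radialisation_pointwise_general N p hp u hu R hR r hr
end
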